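/- arXiv:1503.00446 — 2 statements merged into one kernel-verified Lean document; each statement's English description precedes it below -/
import Mathlib

section
/- There exists a resolvable (5K_4, K_4−e)-design: the edge multiset of 5K_4 (30 edges) can be decomposed into six copies of K_4−e, each spanning all 4 vertices, giving 6 parallel classes. -/
/-- The multiset of edges of a simple graph on `Fin m`. -/
noncomputable def edgeMultiset {m : ℕ} (H : SimpleGraph (Fin m)) : Multiset (Sym2 (Fin m)) :=
  (Set.toFinite H.edgeSet).toFinset.val

/-- The number of edges of a simple graph on `Fin m`. -/
noncomputable def edgeCount {m : ℕ} (H : SimpleGraph (Fin m)) : ℕ := (edgeMultiset H).card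

/-- The multiset of edges of the copy of `G` given by the embedding `f`. -/
noncomputable def blockEdges {n v : ℕ} (G : SimpleGraph (Fin n)) (f : Fin n ↪ Fin v) :
    Multiset (Sym2 (Fin v)) :=
  (edgeMultiset G).map (Sym2.map ⇑f)

/-- `classes` is a resolvable decomposition of the multigraph `lam • H` into copies
of `G`: each parallel class covers every vertex exactly once, and the edges of all
blocks, counted with multiplicity, are exactly the edges of `H` taken `lam` times. -/
def IsResolvableDecomp {n v : ℕ} (lam : ℕ) (G : SimpleGraph (Fin n))
    (H : SimpleGraph (Fin v))
    (classes : Multiset (Multiset (Fin n ↪ Fin v))) : Prop :=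
  (∀ P ∈ classes, P.bind (fun f => Multiset.map ⇑f Finset.univ.val) =
      (Finset.univ : Finset (Fin v)).val) ∧
  (classes.bind id).bind (fun f => blockEdges G f) = lam • edgeMultiset H

/-- A resolvable `(λ K_v, G)`-design. -/
def IsResolvableDesign {n : ℕ} (lam v : ℕ) (G : SimpleGraph (Fin n))
    (classes : Multiset (Multiset (Fin n ↪ Fin v))) : Prop :=
  IsResolvableDecomp lam G (⊤ : SimpleGraph (Fin v)) classes

/-- The 4-cycle `C₄`. -/
def cycle4 : SimpleGraph (Fin 4) :=
  SimpleGraph.fromRel (fun a b => (a.val, b.val) ∈ [(0,1),(1,2),(2,3),(3,0)])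

/-- The kite `K₃ + e` (triangle `0,1,2` with pendant edge `{2,3}`). -/
def kite : SimpleGraph (Fin 4) :=
  SimpleGraph.fromRel (fun a b => (a.val, b.val) ∈ [(0,1),(0,2),(1,2),(2,3)])

/-- The 3-star `K_{1,3}` with center `0`. -/
def star3 : SimpleGraph (Fin 4) :=
  SimpleGraph.fromRel (fun a b => (a.val, b.val) ∈ [(0,1),(0,2),(0,3)])

/-- The graph `K₄ - e` (missing the edge `{2,3}`). -/
def k4e : SimpleGraph (Fin 4) :=
  SimpleGraph.fromRel (fun a b => (a.val, b.val) ∈ [(0,1),(0,2),(1,2),(0,3),(1,3)])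

instance : DecidableRel k4e.Adj := fun a b =>
  decidable_of_iff _ (SimpleGraph.fromRel_adj _ a b).symm

theorem edgeMultiset_eq_edgeFinset_val {m : ℕ} (H : SimpleGraph (Fin m)) [Fintype H.edgeSet] :
    edgeMultiset H = H.edgeFinset.val := by
  rw [edgeMultiset, Set.Finite.toFinset_eq_toFinset]
  rfl

/-- A copy of `G` spanning all `n` vertices is a parallel class by itself. -/
theorem isResolvableDecomp_map_singleton_iff {n : ℕ} (lam : ℕ) (G H : SimpleGraph (Fin n))
    (blocks : Multiset (Fin n ↪ Fin n)) :
    IsResolvableDecomp lam G H (blocks.map ({·})) ↔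
      blocks.bind (blockEdges G) = lam • edgeMultiset H := by
  have blocks_eq : (blocks.map ({·})).bind id = blocks := by
    rw [Multiset.bind_map]
    exact (Multiset.bind_singleton blocks id).trans (Multiset.map_id blocks)
  rw [IsResolvableDecomp, blocks_eq]
  refine and_iff_right ?_
  simp only [Multiset.mem_map]
  rintro _ ⟨f, -, rfl⟩
  rw [Multiset.singleton_bind, ← Finset.map_val, Finset.univ_map_embedding]

/-- The copy `(a,b,c;d)` of `K₄ - e`, with edges `{a,b}, {a,c}, {b,c}, {a,d}, {b,d}`. -/
def k4eCopy (a b c d : Fin 4) (h : Function.Injective ![a, b, c, d]) : Fin 4 ↪ Fin 4 :=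
  ⟨![a, b, c, d], h⟩

def fiveK4Blocks : Multiset (Fin 4 ↪ Fin 4) :=
  {k4eCopy 1 2 0 3 (by decide), k4eCopy 3 0 2 1 (by decide), k4eCopy 1 3 0 2 (by decide),
    k4eCopy 2 0 1 3 (by decide), k4eCopy 1 0 2 3 (by decide), k4eCopy 2 3 1 0 (by decide)}

theorem fiveK4Blocks_bind_blockEdges :
    fiveK4Blocks.bind (blockEdges k4e) = 5 • edgeMultiset (⊤ : SimpleGraph (Fin 4)) := by
  simp only [fiveK4Blocks, Multiset.insert_eq_cons, Multiset.cons_bind, Multiset.singleton_bind,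
    blockEdges, edgeMultiset_eq_edgeFinset_val]
  decide

theorem stmt9 :
    ∃ classes : Multiset (Multiset (Fin 4 ↪ Fin 4)),
      IsResolvableDesign 5 4 k4e classes ∧
      Multiset.card classes = 6 ∧
      ∀ P ∈ classes, Multiset.card P = 1 := by
  refine ⟨fiveK4Blocks.map ({·}), ?_, by rfl, ?_⟩
  · exact (isResolvableDecomp_map_singleton_iff 5 k4e ⊤ _).mpr fiveK4Blocks_bind_blockEdges
  · simp only [Multiset.mem_map]
    rintro _ ⟨f, -, rfl⟩
    rfl
end

section
/- There exists a resolvable (6K_{20}, K_{1,3})-design: the edge multiset of 6K_{20} can be decomposed into 3-stars grouped into 76 parallel classes, each consisting of five vertex-disjoint 3-stars covering all 20 vertices. -/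
/-!
The 76 classes are the translates, under `x ↦ x + 1` on `ℤ/19` fixing `∞`, of the four base
classes. Under this `ℤ/19`-action the edges of `K₂₀` fall into ten orbits of size 19: the edges
`{∞, x}` and, for each `d = 1, …, 9`, the edges `{x, x ± d}`. Translating a parallel class gives a
parallel class, and the development of the 60 base edges is `6 K₂₀` because they meet each of the
ten orbits exactly six times.
-/

section Development

variable {α : Type*} (σ : Equiv.Perm α) (n : ℕ)

def develop : Multiset (Sym2 α) →+ Multiset (Sym2 α) :=
  ∑ k : Fin n, Multiset.mapAddMonoidHom (Sym2.map ⇑(σ ^ (k : ℕ)))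

variable {σ n}

lemma develop_apply (M : Multiset (Sym2 α)) :
    develop σ n M = ∑ k : Fin n, M.map (Sym2.map ⇑(σ ^ (k : ℕ))) := by
  simp [develop]

lemma card_develop (M : Multiset (Sym2 α)) :
    Multiset.card (develop σ n M) = n * Multiset.card M := by
  simp [develop_apply]

lemma develop_singleton_map_pow [NeZero n] (hσ : σ ^ n = 1) (j : ℕ) (e : Sym2 α) :
    develop σ n {Sym2.map ⇑(σ ^ j) e} = develop σ n {e} := by
  simp only [develop_apply, Multiset.map_singleton, Sym2.map_map]
  refine Fintype.sum_equiv (Equiv.addRight (Fin.ofNat n j)) _ _ fun k => ?_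
  rw [Equiv.coe_addRight, Fin.val_add, Fin.val_ofNat, Nat.add_mod_mod, ← pow_eq_pow_mod _ hσ,
    pow_add, Equiv.Perm.coe_mul]

lemma develop_map_of_forall_mem [NeZero n] (hσ : σ ^ n = 1) (r : Sym2 α → Sym2 α)
    (M : Multiset (Sym2 α)) (hr : ∀ e ∈ M, ∃ j : Fin n, Sym2.map ⇑(σ ^ (j : ℕ)) (r e) = e) :
    develop σ n (M.map r) = develop σ n M := by
  induction M using Multiset.induction_on with
  | empty => rfl
  | cons e M ih =>
    obtain ⟨j, hj⟩ := hr e (Multiset.mem_cons_self e M)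
    rw [Multiset.map_cons, ← Multiset.singleton_add, ← Multiset.singleton_add, map_add, map_add,
      ih fun e he => hr e (Multiset.mem_cons_of_mem he), ← develop_singleton_map_pow hσ j, hj]

end Development

section CompleteGraph

variable {v n : ℕ} {σ : Equiv.Perm (Fin v)}

lemma card_edgeMultiset_top : Multiset.card (edgeMultiset (⊤ : SimpleGraph (Fin v))) = v.choose 2 := by
  rw [edgeMultiset, Set.toFinite_toFinset, ← SimpleGraph.edgeFinset, Finset.card_val,
    SimpleGraph.card_edgeFinset_top_eq_card_choose_two, Fintype.card_fin]

lemma develop_eq_edgeMultiset_top (R : Multiset (Sym2 (Fin v))) (r : Sym2 (Fin v) → Sym2 (Fin v))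
    (hcard : n * Multiset.card R ≤ v.choose 2)
    (hr : ∀ a b : Fin v, a ≠ b →
      r s(a, b) ∈ R ∧ ∃ k : Fin n, Sym2.map ⇑(σ ^ (k : ℕ)) (r s(a, b)) = s(a, b)) :
    develop σ n R = edgeMultiset ⊤ := by
  refine (Multiset.eq_of_le_of_card_le ?_ ?_).symm
  · refine (Multiset.le_iff_subset (Set.toFinite _).toFinset.nodup).2 fun e he => ?_
    induction e using Sym2.ind with
    | _ a b =>
      have hab : a ≠ b := by simpa [edgeMultiset] using he
      obtain ⟨hR, k, hk⟩ := hr a b hab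
      rw [← hk]
      simp only [develop_apply, Multiset.mem_sum, Finset.mem_univ, true_and, Multiset.mem_map]
      exact ⟨k, _, hR, rfl⟩
  · rwa [card_develop, card_edgeMultiset_top]

end CompleteGraph

section Classes

variable {m v : ℕ}

abbrev IsParallelClass (P : Multiset (Fin m ↪ Fin v)) : Prop :=
  P.bind (fun f => Multiset.map ⇑f Finset.univ.val) = (Finset.univ : Finset (Fin v)).val

lemma IsParallelClass.map_trans {P : Multiset (Fin m ↪ Fin v)} (hP : IsParallelClass P)
    (τ : Equiv.Perm (Fin v)) : IsParallelClass (P.map fun f => f.trans τ.toEmbedding) := by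
  calc _ = (P.bind fun f : Fin m ↪ Fin v => Multiset.map ⇑f Finset.univ.val).map τ := by
        simp only [Multiset.bind_map, Multiset.map_bind, Multiset.map_map, Function.comp_def,
          Function.Embedding.trans_apply, Equiv.coe_toEmbedding]
    _ = Finset.univ.val := by rw [hP]; exact congrArg Finset.val (Finset.map_univ_equiv τ)

lemma blockEdges_trans (G : SimpleGraph (Fin m)) (f : Fin m ↪ Fin v) (τ : Equiv.Perm (Fin v)) :
    blockEdges G (f.trans τ.toEmbedding) = (blockEdges G f).map (Sym2.map τ) := by
  simp [blockEdges, Multiset.map_map, Sym2.map_map]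

def developClasses (σ : Equiv.Perm (Fin v)) (n : ℕ) (base : Multiset (Multiset (Fin m ↪ Fin v))) :
    Multiset (Multiset (Fin m ↪ Fin v)) :=
  base.bind fun B => (Finset.univ : Finset (Fin n)).val.map fun k =>
    B.map fun f => f.trans (σ ^ (k : ℕ)).toEmbedding

variable {n : ℕ} {σ : Equiv.Perm (Fin v)} {base : Multiset (Multiset (Fin m ↪ Fin v))}

lemma card_developClasses : Multiset.card (developClasses σ n base) = n * Multiset.card base := by
  simp only [developClasses, Multiset.card_bind, Multiset.card_map, Finset.card_val,
    Finset.card_univ, Fintype.card_fin, Function.comp_def, Multiset.map_const',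
    Multiset.sum_replicate, smul_eq_mul, mul_comm]

lemma mem_developClasses {P : Multiset (Fin m ↪ Fin v)} :
    P ∈ developClasses σ n base ↔
      ∃ B ∈ base, ∃ k : Fin n, B.map (fun f => f.trans (σ ^ (k : ℕ)).toEmbedding) = P := by
  simp [developClasses]

lemma developClasses_blockEdges (G : SimpleGraph (Fin m)) :
    ((developClasses σ n base).bind id).bind (blockEdges G) =
      develop σ n ((base.bind id).bind (blockEdges G)) := by
  simp only [developClasses, develop_apply, Multiset.bind_assoc, Multiset.bind_map, id,
    blockEdges_trans, Multiset.map_bind]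
  rw [Multiset.bind_bind]
  rfl

lemma isResolvableDecomp_developClasses {lam : ℕ} {G : SimpleGraph (Fin m)}
    {H : SimpleGraph (Fin v)} (hbase : ∀ B ∈ base, IsParallelClass B)
    (hedges : develop σ n ((base.bind id).bind (blockEdges G)) = lam • edgeMultiset H) :
    IsResolvableDecomp lam G H (developClasses σ n base) := by
  refine ⟨fun P hP => ?_, by rw [developClasses_blockEdges, hedges]⟩
  obtain ⟨B, hB, k, rfl⟩ := mem_developClasses.1 hP
  exact (hbase B hB).map_trans _

end Classes

-- `ℤ/19 ∪ {∞}` is modelled by `Fin 20`, with `19` playing `∞`.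
local notation "∞" => (19 : Fin 20)

def rot : Equiv.Perm (Fin 20) where
  toFun x := if x = ∞ then ∞ else ⟨(x + 1) % 19, by omega⟩
  invFun x := if x = ∞ then ∞ else ⟨(x + 18) % 19, by omega⟩
  left_inv := by decide
  right_inv := by decide

lemma rot_pow_nineteen : rot ^ 19 = 1 := by decide

def star (a b c d : Fin 20) (h : [a, b, c, d].Nodup := by decide) : Fin 4 ↪ Fin 20 :=
  ⟨![a, b, c, d], by rw [← List.nodup_ofFn]; simpa [List.ofFn_succ] using h⟩

def baseClasses : Multiset (Multiset (Fin 4 ↪ Fin 20)) :=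
  {{star ∞ 4 5 12, star 0 3 9 11, star 8 1 2 13, star 10 7 14 18, star 15 6 16 17},
   {star 11 ∞ 9 12, star 0 3 4 5, star 8 1 2 13, star 10 7 14 18, star 15 6 16 17},
   {star 5 ∞ 3 11, star 0 4 9 12, star 8 1 2 13, star 10 7 14 18, star 15 6 16 17},
   {star 3 ∞ 9 4, star 0 5 12 11, star 8 1 2 13, star 10 7 14 18, star 15 6 16 17}}

def differenceReps : Multiset (Sym2 (Fin 20)) :=
  {s(0, ∞), s(0, 1), s(0, 2), s(0, 3), s(0, 4), s(0, 5), s(0, 6), s(0, 7), s(0, 8), s(0, 9)}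

/-- The member of `differenceReps` in the `rot`-orbit of an edge: `{x, y} ↦ {0, d}` where
`d ∈ {1, …, 9}` is `±(y - x)` mod 19. -/
def orbitRep : Sym2 (Fin 20) → Sym2 (Fin 20) :=
  Sym2.lift ⟨fun a b => if a = ∞ ∨ b = ∞ then s(0, ∞) else
    s(0, Fin.ofNat 20 (min ((b.val + 19 - a.val) % 19) ((a.val + 19 - b.val) % 19))), by
      intro a b; simp [or_comm, min_comm]⟩

lemma develop_differenceReps : develop rot 19 differenceReps = edgeMultiset ⊤ :=
  develop_eq_edgeMultiset_top _ orbitRep (by decide) (by decide +kernel)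

lemma edgeMultiset_star3 : edgeMultiset star3 = {s(0, 1), s(0, 2), s(0, 3)} := by
  rw [edgeMultiset]
  refine (Multiset.Nodup.ext (Set.toFinite _).toFinset.nodup (by decide)).2 fun e => ?_
  induction e using Sym2.ind with
  | _ a b =>
    rw [Finset.mem_val, Set.Finite.mem_toFinset, SimpleGraph.mem_edgeSet]
    simp only [star3, SimpleGraph.fromRel_adj]
    revert a b; decide

lemma blockEdges_star3 :
    blockEdges star3 = fun f : Fin 4 ↪ Fin 20 => {s(f 0, f 1), s(f 0, f 2), s(f 0, f 3)} :=
  funext fun f => by rw [blockEdges, edgeMultiset_star3]; rfl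

lemma map_orbitRep_baseEdges :
    ((baseClasses.bind id).bind (blockEdges star3)).map orbitRep = 6 • differenceReps := by
  rw [blockEdges_star3]; decide +kernel

lemma baseEdges_mem_orbit : ∀ e ∈ (baseClasses.bind id).bind (blockEdges star3),
    ∃ j : Fin 19, Sym2.map ⇑(rot ^ (j : ℕ)) (orbitRep e) = e := by
  rw [blockEdges_star3]; decide +kernel

lemma develop_baseEdges :
    develop rot 19 ((baseClasses.bind id).bind (blockEdges star3)) = 6 • edgeMultiset ⊤ := by
  rw [← develop_map_of_forall_mem rot_pow_nineteen orbitRep _ baseEdges_mem_orbit,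
    map_orbitRep_baseEdges, map_nsmul, develop_differenceReps]

theorem stmt14 :
    ∃ classes : Multiset (Multiset (Fin 4 ↪ Fin 20)),
      IsResolvableDesign 6 20 star3 classes ∧
      Multiset.card classes = 76 ∧
      ∀ P ∈ classes, Multiset.card P = 5 := by
  have hcover : ∀ B ∈ baseClasses, IsParallelClass B := by decide
  have hcard : ∀ B ∈ baseClasses, Multiset.card B = 5 := by decide
  refine ⟨developClasses rot 19 baseClasses,
    isResolvableDecomp_developClasses hcover develop_baseEdges,
    by rw [card_developClasses]; rfl, fun P hP => ?_⟩
  obtain ⟨B, hB, k, rfl⟩ := mem_developClasses.1 hP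
  rw [Multiset.card_map, hcard B hB]
end
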